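/- Let p be a prime and n a positive integer with gcd(p, 4n) = 1, and let Q_n denote the generalized quaternion (dicyclic) group of order 4n. Then for every multiplicative Lie algebra structure ⋆̃ on G = ℤ_p × Q_n there exists a multiplicative Lie algebra structure ⋆ on Q_n such that (h,x) ⋆̃ (k,y) = (0, x ⋆ y) for all (h,x), (k,y) ∈ G. -/

import Mathlib

/-- A multiplicative Lie algebra structure on a group `G`. -/
def IsMulLieAlgebra {G : Type*} [Group G] (star : G → G → G) : Prop :=
  (∀ x, star x x = 1) ∧
  (∀ x y z, star x (y * z) = star x y * (y * star x z * y⁻¹)) ∧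
  (∀ x y z, star (x * y) z = (x * star y z * x⁻¹) * star x z) ∧
  (∀ x y z,
    star (star x y) (y * z * y⁻¹) * star (star y z) (z * x * z⁻¹) *
      star (star z x) (x * y * x⁻¹) = 1) ∧
  (∀ x y z, z * star x y * z⁻¹ = star (z * x * z⁻¹) (z * y * z⁻¹))

/-!
Write `G = A × Q` with `A` cyclic of order coprime to `|Q|` (here `A = ℤ_p`, `Q = Q_n`).
Elements `z ∈ A` are central, so `z ⋆ −` respects powers of `z`; hence `(z ⋆ w)^|A| = 1`, which
by coprimality puts `z ⋆ w` in `A`, so `z ⋆ −` is a homomorphism with values in `A`. It then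
kills `Q` (coprime orders) and `A` (which is generated by one element `g` with `g ⋆ g = 1`).
Thus `A` is invisible to `⋆` from both sides, and `(x ⋆ y).1` for `x, y ∈ Q` is a homomorphism
in `y` from `Q` to `A`, hence trivial: `⋆` restricts to `Q`.
-/

namespace IsMulLieAlgebra

section Group

variable {G : Type*} [Group G] {s : G → G → G}

lemma star_one_right (hs : IsMulLieAlgebra s) (x : G) : s x 1 = 1 := by
  simpa using hs.2.1 x 1 1

lemma star_one_left (hs : IsMulLieAlgebra s) (x : G) : s 1 x = 1 := by
  simpa using hs.2.2.1 1 1 x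

/-- Expand `1 = (xy) ⋆ (xy)` with both distributive laws. -/
lemma star_swap (hs : IsMulLieAlgebra s) (x y : G) : s y x = (s x y)⁻¹ := by
  have hxy : s (x * y) (x * y) = x * (s y x * s x y) * x⁻¹ := by
    rw [hs.2.2.1, hs.2.1, hs.2.1, hs.1, hs.1]
    group
  rw [hs.1, eq_comm, conj_eq_one_iff, mul_eq_one_iff_eq_inv] at hxy
  exact hxy

lemma star_pow_left (hs : IsMulLieAlgebra s) {z : G} (hz : z ∈ Subgroup.center G)
    (w : G) (b : ℕ) : s (z ^ b) w = s z w ^ b := by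
  induction b with
  | zero => simp [hs.star_one_left]
  | succ b ih =>
    rw [pow_succ, hs.2.2.1, ih, ← Subgroup.mem_center_iff.mp (pow_mem hz b), mul_inv_cancel_right,
      pow_succ']

lemma star_pow_right (hs : IsMulLieAlgebra s) {a w : G} (hc : s a w ∈ Subgroup.center G)
    (b : ℕ) : s a (w ^ b) = s a w ^ b := by
  induction b with
  | zero => simp [hs.star_one_right]
  | succ b ih =>
    rw [pow_succ, hs.2.1, ih, Subgroup.mem_center_iff.mp hc, mul_inv_cancel_right, pow_succ]

lemma star_mul_left_of_mem_center (hs : IsMulLieAlgebra s) {z : G} (hz : z ∈ Subgroup.center G)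
    (hz₀ : ∀ w, s z w = 1) (x w : G) : s (z * x) w = s x w := by
  rw [hs.2.2.1, hz₀, mul_one, ← Subgroup.mem_center_iff.mp hz, mul_inv_cancel_right]

lemma star_mul_right_of_mem_center (hs : IsMulLieAlgebra s) {z : G} (hz : z ∈ Subgroup.center G)
    (hz₀ : ∀ w, s z w = 1) (w y : G) : s w (z * y) = s w y := by
  rw [hs.2.1, hs.star_swap, hz₀, inv_one, one_mul, ← Subgroup.mem_center_iff.mp hz,
    mul_inv_cancel_right]

end Group

lemma comap {H G : Type*} [Group H] [Group G] {s : G → G → G} (hs : IsMulLieAlgebra s)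
    (f : H →* G) (hf : Function.Injective f) (t : H → H → H)
    (hft : ∀ x y, f (t x y) = s (f x) (f y)) : IsMulLieAlgebra t := by
  refine ⟨fun x => hf ?_, fun x y z => hf ?_, fun x y z => hf ?_, fun x y z => hf ?_,
    fun x y z => hf ?_⟩ <;> simp only [hft, map_mul, map_inv, map_one]
  exacts [hs.1 _, hs.2.1 _ _ _, hs.2.2.1 _ _ _, hs.2.2.2.1 _ _ _, hs.2.2.2.2 _ _ _]

section Prod

variable {A Q : Type*} [CommGroup A] [Group Q] {s : A × Q → A × Q → A × Q}

lemma mem_center_of_snd_eq_one {u : A × Q} (hu : u.2 = 1) : u ∈ Subgroup.center (A × Q) :=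
  Subgroup.mem_center_iff.mpr fun g => Prod.ext (mul_comm _ _) (by simp [hu])

lemma fst_star_mul (hs : IsMulLieAlgebra s) (g w w' : A × Q) :
    (s g (w * w')).1 = (s g w).1 * (s g w').1 := by
  simp [hs.2.1, mul_comm w.1]

lemma star_mk_one_pow_card (hs : IsMulLieAlgebra s) (a : A) (w : A × Q) :
    s (a, 1) w ^ Nat.card A = 1 := by
  rw [← hs.star_pow_left (mem_center_of_snd_eq_one rfl), Prod.pow_mk, pow_card_eq_one', one_pow,
    Prod.mk_one_one, hs.star_one_left]

/-- `s (a, 1) w` has order dividing `|A|`, so it lies in `A`. -/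
lemma star_mk_one_mem_center (hs : IsMulLieAlgebra s) (hcop : (Nat.card A).Coprime (Nat.card Q))
    (a : A) (w : A × Q) : s (a, 1) w ∈ Subgroup.center (A × Q) :=
  mem_center_of_snd_eq_one <| (pow_eq_one_iff_of_coprime hcop).mp
    ⟨congrArg Prod.snd (hs.star_mk_one_pow_card a w), pow_card_eq_one'⟩

lemma star_mk_one_one_mk (hs : IsMulLieAlgebra s) (hcop : (Nat.card A).Coprime (Nat.card Q))
    (a : A) (y : Q) : s (a, 1) (1, y) = 1 := by
  refine (pow_eq_one_iff_of_coprime hcop).mp ⟨hs.star_mk_one_pow_card a _, ?_⟩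
  rw [← hs.star_pow_right (hs.star_mk_one_mem_center hcop a _), Prod.pow_mk, one_pow,
    pow_card_eq_one', Prod.mk_one_one, hs.star_one_right]

lemma star_mk_one_mk_one [Finite A] [IsCyclic A] (hs : IsMulLieAlgebra s)
    (hcop : (Nat.card A).Coprime (Nat.card Q)) (a b : A) :
    s (a, 1) (b, 1) = 1 := by
  obtain ⟨g, hg⟩ := IsCyclic.exists_monoid_generator (α := A)
  have hpow : ∀ c : A, ∃ i : ℕ, ((c, 1) : A × Q) = (g, 1) ^ i := fun c => by
    obtain ⟨i, rfl⟩ := Submonoid.mem_powers_iff _ _ |>.mp (hg c)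
    exact ⟨i, by rw [Prod.pow_mk, one_pow]⟩
  obtain ⟨i, hi⟩ := hpow a
  obtain ⟨j, hj⟩ := hpow b
  rw [hi, hj, hs.star_pow_left (mem_center_of_snd_eq_one rfl),
    hs.star_pow_right (hs.star_mk_one_mem_center hcop g _), hs.1, one_pow, one_pow]

lemma star_mk_one [Finite A] [IsCyclic A] (hs : IsMulLieAlgebra s)
    (hcop : (Nat.card A).Coprime (Nat.card Q)) (a : A) (w : A × Q) :
    s (a, 1) w = 1 := by
  rw [show w = (w.1, 1) * (1, w.2) by simp, hs.2.1, hs.star_mk_one_mk_one hcop,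
    hs.star_mk_one_one_mk hcop]
  simp

/-- `w ↦ (s (1, x) w).1` is a homomorphism into `A`, so it kills `Q` by coprimality. -/
lemma fst_star_one_mk (hs : IsMulLieAlgebra s) (hcop : (Nat.card A).Coprime (Nat.card Q))
    (x y : Q) : (s (1, x) (1, y)).1 = 1 := by
  let F : A × Q →* A := MonoidHom.mk' (fun w => (s (1, x) w).1) (fst_star_mul hs _)
  refine (pow_eq_one_iff_of_coprime hcop).mp ⟨pow_card_eq_one', ?_⟩
  change F (1, y) ^ Nat.card Q = 1
  rw [← map_pow, Prod.pow_mk, one_pow, pow_card_eq_one', Prod.mk_one_one, map_one]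

lemma star_eq_mk_one_star_one_mk [Finite A] [IsCyclic A] (hs : IsMulLieAlgebra s)
    (hcop : (Nat.card A).Coprime (Nat.card Q)) (h k : A) (x y : Q) :
    s (h, x) (k, y) = (1, (s (1, x) (1, y)).2) := by
  have hnull := hs.star_mk_one hcop
  rw [show ((h, x) : A × Q) = (h, 1) * (1, x) by simp,
    show ((k, y) : A × Q) = (k, 1) * (1, y) by simp,
    hs.star_mul_left_of_mem_center (mem_center_of_snd_eq_one rfl) (hnull h),
    hs.star_mul_right_of_mem_center (mem_center_of_snd_eq_one rfl) (hnull k)]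
  exact Prod.ext (hs.fst_star_one_mk hcop x y) rfl

theorem exists_star_eq_one_mk [Finite A] [IsCyclic A] (hs : IsMulLieAlgebra s)
    (hcop : (Nat.card A).Coprime (Nat.card Q)) :
    ∃ t : Q → Q → Q, IsMulLieAlgebra t ∧
      ∀ (h k : A) (x y : Q), s (h, x) (k, y) = (1, t x y) :=
  ⟨fun x y => (s (1, x) (1, y)).2,
    hs.comap (MonoidHom.inr A Q) (Prod.mk_right_injective 1) _ fun x y =>
      (hs.star_eq_mk_one_star_one_mk hcop 1 1 x y).symm,
    hs.star_eq_mk_one_star_one_mk hcop⟩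

end Prod

end IsMulLieAlgebra

/-- for a prime `p` and `n ≥ 1` with `gcd(p, 4n) = 1`, every
multiplicative Lie algebra structure `⋆̃` on `G = ℤ_p × Q_n` (with `Q_n` the
generalized quaternion/dicyclic group of order `4n`) comes from a multiplicative
Lie algebra structure `⋆` on `Q_n` via `(h,x) ⋆̃ (k,y) = (0, x ⋆ y)`. -/
theorem zmod_quaternion_n {p n : ℕ} (hp : p.Prime) (hn : 0 < n)
    (hcop : Nat.Coprime p (4 * n))
    (tstar : (Multiplicative (ZMod p) × QuaternionGroup n) →
      (Multiplicative (ZMod p) × QuaternionGroup n) →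
      (Multiplicative (ZMod p) × QuaternionGroup n))
    (htstar : IsMulLieAlgebra tstar) :
    ∃ star : QuaternionGroup n → QuaternionGroup n → QuaternionGroup n,
      IsMulLieAlgebra star ∧
      ∀ (h k : Multiplicative (ZMod p)) (x y : QuaternionGroup n),
        tstar (h, x) (k, y) = (Multiplicative.ofAdd (0 : ZMod p), star x y) := by
  have : NeZero p := ⟨hp.ne_zero⟩
  have : NeZero n := ⟨hn.ne'⟩
  have hcard : (Nat.card (Multiplicative (ZMod p))).Coprime (Nat.card (QuaternionGroup n)) := by
    rwa [Nat.card_congr Multiplicative.toAdd, Nat.card_zmod, Nat.card_eq_fintype_card,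
      QuaternionGroup.card]
  simpa only [ofAdd_zero] using htstar.exists_star_eq_one_mk hcard
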